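/- For every integer m ≥ 1, the polynomial x^{m+8} − x^{m+7} − x^{m+5} + x^3 + x − 1 has a unique real root β_m > 1, and the largest eigenvalue of the adjacency matrix of the tree T_{2,4,4+m} equals β_m^{1/2} + β_m^{−1/2}. -/

import Mathlib

/-!
Put `β = s²` with `s > 1` and `w j = s ^ j - s⁻¹ ^ j`, so that `w 0 = 0` and
`w j + w (j + 2) = (s + s⁻¹) * w (j + 1)`. On `T_{p+1,q+1,r+1}` give the vertex at distance `i`
from the centre on the first arm the value `w (p + 1 - i) * w (q + 1) * w (r + 1)`, and similarly on
the other two arms. This vector is positive and vanishes one step beyond each leaf, so it satisfies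
the eigenvalue equation for `s + s⁻¹` at every vertex but the centre, where the equation reads
`w p / w (p + 1) + w q / w (q + 1) + w r / w (r + 1) = s + s⁻¹`. For `(p, q, r) = (1, 3, 3 + m)`,
clearing denominators turns this into the vanishing of the polynomial at `β`.

The adjacency matrix is symmetric and nonnegative, so pairing the absolute values of any eigenvector
with this positive eigenvector bounds every eigenvalue in absolute value by `s + s⁻¹`. A root `β > 1`
exists by the intermediate value theorem, and it is unique because the largest eigenvalue is and
`β ↦ √β + 1 / √β` is injective on `(1, ∞)`.
-/

/-- Adjacency (as a relation on natural-number labels) of the tree `T_{p+1, q+1, r+1}`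
formed from three paths with `p`, `q`, `r` edges joined at the common vertex `0`:
the first arm uses vertices `1, …, p`, the second `p+1, …, p+q`,
the third `p+q+1, …, p+q+r`. -/
def armAdj (p q i j : ℕ) : Prop :=
  (i = 0 ∧ (j = 1 ∨ j = p + 1 ∨ j = p + q + 1)) ∨
  (j = 0 ∧ (i = 1 ∨ i = p + 1 ∨ i = p + q + 1)) ∨
  (i + 1 = j ∧ i ≠ 0 ∧ j ≠ p + 1 ∧ j ≠ p + q + 1) ∨
  (j + 1 = i ∧ j ≠ 0 ∧ i ≠ p + 1 ∧ i ≠ p + q + 1)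

instance (p q i j : ℕ) : Decidable (armAdj p q i j) := by
  unfold armAdj; infer_instance

/-- The real adjacency matrix of the tree `T_{p+1, q+1, r+1}` on `1 + p + q + r` vertices. -/
def treeMatrix (p q r : ℕ) : Matrix (Fin (1 + p + q + r)) (Fin (1 + p + q + r)) ℝ :=
  Matrix.of fun i j => if armAdj p q (i : ℕ) (j : ℕ) then 1 else 0

open Matrix Finset

theorem abs_le_of_mulVec_eq_smul_of_vecMul_eq_smul {ι : Type*} [Fintype ι]
    {A : Matrix ι ι ℝ} (hA : ∀ i j, 0 ≤ A i j) {v u : ι → ℝ} {ρ μ : ℝ}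
    (hv : ∀ i, 0 < v i) (hvA : v ᵥ* A = ρ • v) (hu : u ≠ 0) (huA : A *ᵥ u = μ • u) :
    |μ| ≤ ρ := by
  set a : ι → ℝ := fun i => |u i|
  have ha : |μ| • a ≤ A *ᵥ a := fun i => by
    calc |μ| * |u i| = |∑ j, A i j * u j| := by
          rw [← abs_mul, ← smul_eq_mul, ← Pi.smul_apply, ← huA]; rfl
      _ ≤ ∑ j, |A i j * u j| := abs_sum_le_sum_abs _ _
      _ = (A *ᵥ a) i := by simp only [abs_mul, abs_of_nonneg (hA i _)]; rfl
  have hpos : 0 < v ⬝ᵥ a := by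
    obtain ⟨i, hi⟩ := Function.ne_iff.mp hu
    exact sum_pos' (fun j _ => mul_nonneg (hv j).le (abs_nonneg _))
      ⟨i, mem_univ _, mul_pos (hv i) (abs_pos.mpr hi)⟩
  have key : |μ| * (v ⬝ᵥ a) ≤ ρ * (v ⬝ᵥ a) :=
    calc |μ| * (v ⬝ᵥ a) = v ⬝ᵥ (|μ| • a) := by rw [dotProduct_smul, smul_eq_mul]
      _ ≤ v ⬝ᵥ (A *ᵥ a) := dotProduct_le_dotProduct_of_nonneg_left ha fun i => (hv i).le
      _ = ρ * (v ⬝ᵥ a) := by rw [dotProduct_mulVec, hvA, smul_dotProduct, smul_eq_mul]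
  exact le_of_mul_le_mul_right key hpos

theorem isGreatest_eigenvalues_of_pos_eigenvector {ι : Type*} [Fintype ι] [Nonempty ι]
    {A : Matrix ι ι ℝ} (hA : ∀ i j, 0 ≤ A i j) (hAs : A.IsSymm) {v : ι → ℝ} {ρ : ℝ}
    (hv : ∀ i, 0 < v i) (hvA : A *ᵥ v = ρ • v) :
    IsGreatest {μ : ℝ | ∃ u : ι → ℝ, u ≠ 0 ∧ A *ᵥ u = μ • u} ρ := by
  refine ⟨⟨v, fun h => (hv (Classical.arbitrary ι)).ne' (congrFun h _), hvA⟩, ?_⟩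
  rintro μ ⟨u, hu, huA⟩
  have hvA' : v ᵥ* A = ρ • v := by rw [← mulVec_transpose, hAs.eq, hvA]
  exact (le_abs_self μ).trans (abs_le_of_mulVec_eq_smul_of_vecMul_eq_smul hA hv hvA' hu huA)

section Tree

variable {p q r : ℕ}

theorem armAdj_comm {i j : ℕ} : armAdj p q i j ↔ armAdj p q j i := by
  unfold armAdj; omega

theorem treeMatrix_nonneg (i j : Fin (1 + p + q + r)) : 0 ≤ treeMatrix p q r i j := by
  simp only [treeMatrix, of_apply]; split_ifs <;> norm_num

theorem treeMatrix_isSymm : (treeMatrix p q r).IsSymm :=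
  IsSymm.ext fun i j => by simp only [treeMatrix, of_apply, armAdj_comm]

theorem treeMatrix_mulVec_apply (g : ℕ → ℝ) (k : Fin (1 + p + q + r)) :
    (treeMatrix p q r *ᵥ fun j => g j) k =
      ∑ j ∈ (range (1 + p + q + r)).filter (armAdj p q k), g j := by
  rw [sum_filter, ← Fin.sum_univ_eq_sum_range]
  simp only [treeMatrix, mulVec, dotProduct, of_apply, ite_mul, one_mul, zero_mul]

theorem sum_filter_armAdj_zero (hp : 0 < p) (hq : 0 < q) (hr : 0 < r) (g : ℕ → ℝ) :
    ∑ j ∈ (range (1 + p + q + r)).filter (armAdj p q 0), g j =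
      g 1 + g (p + 1) + g (p + q + 1) := by
  have : (range (1 + p + q + r)).filter (armAdj p q 0) = {1, p + 1, p + q + 1} := by
    ext j
    simp only [mem_filter, mem_range, mem_insert, mem_singleton, armAdj, true_and]
    omega
  rw [this, sum_insert (by simp only [mem_insert, mem_singleton]; omega), sum_pair (by omega),
    ← add_assoc]

-- `o` is the label offset and `L` the length of an arm; `if i = 0 then 0 else o + i` is the vertex
-- at distance `i` from the centre on it.
theorem sum_filter_armAdj_arm {o L i : ℕ}
    (harm : o = 0 ∧ L = p ∨ o = p ∧ L = q ∨ o = p + q ∧ L = r) (hi : i < L) (g : ℕ → ℝ) :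
    ∑ j ∈ (range (1 + p + q + r)).filter (armAdj p q (o + i + 1)), g j =
      g (if i = 0 then 0 else o + i) + if i + 1 < L then g (o + i + 2) else 0 := by
  have : (range (1 + p + q + r)).filter (armAdj p q (o + i + 1)) =
      insert (if i = 0 then 0 else o + i) (if i + 1 < L then {o + i + 2} else ∅) := by
    ext j
    simp only [mem_filter, mem_range, mem_insert, armAdj]
    split_ifs <;> simp only [mem_singleton, notMem_empty, false_and, false_or, or_false] <;>
      omega
  rw [this, sum_insert (by split_ifs <;> simp)]
  split_ifs <;> simp only [sum_singleton, sum_empty, add_zero]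

theorem sum_filter_armAdj_arm_eq_mul {o L : ℕ}
    (harm : o = 0 ∧ L = p ∨ o = p ∧ L = q ∨ o = p + q ∧ L = r) {g f : ℕ → ℝ} {ρ : ℝ}
    (hf : ∀ i ≤ L, g (if i = 0 then 0 else o + i) = f i) (hfL : f (L + 1) = 0)
    (hrec : ∀ i < L, f i + f (i + 2) = ρ * f (i + 1)) {i : ℕ} (hi : i < L) :
    ∑ j ∈ (range (1 + p + q + r)).filter (armAdj p q (o + i + 1)), g j =
      ρ * g (o + i + 1) := by
  have hnext : (if i + 1 < L then g (o + i + 2) else 0) = f (i + 2) := by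
    split_ifs with h
    · simpa [add_assoc] using hf (i + 2) h
    · rw [show i + 2 = L + 1 by omega, hfL]
  have hcur : g (o + i + 1) = f (i + 1) := by simpa [add_assoc] using hf (i + 1) hi
  rw [sum_filter_armAdj_arm harm hi, hf i hi.le, hnext, hrec i hi, hcur]

-- `a`, `b`, `c` are the values along the three arms, indexed by the distance from the centre.
def armVec (p q : ℕ) (a b c : ℕ → ℝ) (k : ℕ) : ℝ :=
  if k ≤ p then a k else if k ≤ p + q then b (k - p) else c (k - p - q)

section ArmVec

variable {a b c : ℕ → ℝ}

theorem armVec_arm₁ {i : ℕ} (hi : i ≤ p) :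
    armVec p q a b c (if i = 0 then 0 else 0 + i) = a i := by
  split_ifs with h <;> simp [armVec, h, hi]

theorem armVec_arm₂ (hb0 : b 0 = a 0) {i : ℕ} (hi : i ≤ q) :
    armVec p q a b c (if i = 0 then 0 else p + i) = b i := by
  split_ifs with h
  · simp [armVec, h, hb0]
  · simp [armVec, hi, show ¬ p + i ≤ p by omega]

theorem armVec_arm₃ (hc0 : c 0 = a 0) {i : ℕ} :
    armVec p q a b c (if i = 0 then 0 else p + q + i) = c i := by
  split_ifs with h
  · simp [armVec, h, hc0]
  · simp [armVec, show ¬ p + q + i ≤ p by omega, show ¬ p + q + i ≤ p + q by omega,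
      show p + q + i - p - q = i by omega]

theorem armVec_pos (ha : ∀ i ≤ p, 0 < a i) (hb : ∀ i ≤ q, 0 < b i) (hc : ∀ i ≤ r, 0 < c i)
    {k : ℕ} (hk : k < 1 + p + q + r) : 0 < armVec p q a b c k := by
  unfold armVec
  split_ifs with h₁ h₂
  exacts [ha k h₁, hb _ (by omega), hc _ (by omega)]

end ArmVec

theorem treeMatrix_mulVec_armVec (hp : 0 < p) (hq : 0 < q) (hr : 0 < r)
    {a b c : ℕ → ℝ} {ρ : ℝ}
    (hb0 : b 0 = a 0) (hc0 : c 0 = a 0)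
    (ha : a (p + 1) = 0) (hb : b (q + 1) = 0) (hc : c (r + 1) = 0)
    (hrec_a : ∀ i < p, a i + a (i + 2) = ρ * a (i + 1))
    (hrec_b : ∀ i < q, b i + b (i + 2) = ρ * b (i + 1))
    (hrec_c : ∀ i < r, c i + c (i + 2) = ρ * c (i + 1))
    (hcenter : a 1 + b 1 + c 1 = ρ * a 0) :
    treeMatrix p q r *ᵥ (fun k : Fin (1 + p + q + r) => armVec p q a b c k) =
      ρ • fun k : Fin (1 + p + q + r) => armVec p q a b c k := by
  ext ⟨k, hk⟩
  rw [treeMatrix_mulVec_apply, Pi.smul_apply, smul_eq_mul]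
  dsimp only
  obtain rfl | ⟨i, rfl, hi⟩ | ⟨i, rfl, hi⟩ | ⟨i, rfl, hi⟩ :
      k = 0 ∨ (∃ i, k = 0 + i + 1 ∧ i < p) ∨ (∃ i, k = p + i + 1 ∧ i < q) ∨
        ∃ i, k = p + q + i + 1 ∧ i < r := by
    by_cases h0 : k = 0
    · exact Or.inl h0
    by_cases h1 : k ≤ p
    · exact Or.inr (Or.inl ⟨k - 1, by omega, by omega⟩)
    by_cases h2 : k ≤ p + q
    · exact Or.inr (Or.inr (Or.inl ⟨k - p - 1, by omega, by omega⟩))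
    · exact Or.inr (Or.inr (Or.inr ⟨k - p - q - 1, by omega, by omega⟩))
  · rw [sum_filter_armAdj_zero hp hq hr]
    have h1 : armVec p q a b c 1 = a 1 := armVec_arm₁ hp
    have h2 : armVec p q a b c (p + 1) = b 1 := armVec_arm₂ hb0 hq
    have h3 : armVec p q a b c (p + q + 1) = c 1 := armVec_arm₃ (i := 1) hc0
    rw [h1, h2, h3, hcenter, armVec, if_pos p.zero_le]
  · exact sum_filter_armAdj_arm_eq_mul (Or.inl ⟨rfl, rfl⟩) (fun i hi => armVec_arm₁ hi)
      ha hrec_a hi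
  · exact sum_filter_armAdj_arm_eq_mul (Or.inr (Or.inl ⟨rfl, rfl⟩))
      (fun i hi => armVec_arm₂ hb0 hi) hb hrec_b hi
  · exact sum_filter_armAdj_arm_eq_mul (Or.inr (Or.inr ⟨rfl, rfl⟩))
      (fun _ _ => armVec_arm₃ hc0) hc hrec_c hi

end Tree

noncomputable def powSubInvPow (s : ℝ) (j : ℕ) : ℝ := s ^ j - s⁻¹ ^ j

section PowSubInvPow

variable {s : ℝ}

@[simp]
theorem powSubInvPow_zero (s : ℝ) : powSubInvPow s 0 = 0 := by simp [powSubInvPow]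

theorem powSubInvPow_add_two (hs : s ≠ 0) (j : ℕ) :
    powSubInvPow s j + powSubInvPow s (j + 2) = (s + s⁻¹) * powSubInvPow s (j + 1) := by
  simp only [powSubInvPow, pow_succ]
  field_simp
  ring

theorem powSubInvPow_pos (hs : 1 < s) {j : ℕ} (hj : j ≠ 0) : 0 < powSubInvPow s j := by
  have h1 : 1 < s ^ j := one_lt_pow₀ hs hj
  have h2 : s⁻¹ ^ j < 1 := pow_lt_one₀ (by positivity) (inv_lt_one_of_one_lt₀ hs) hj
  simp only [powSubInvPow]
  linarith

theorem powSubInvPow_sub_add_two (hs : s ≠ 0) {L i : ℕ} (hi : i < L) :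
    powSubInvPow s (L + 1 - i) + powSubInvPow s (L + 1 - (i + 2)) =
      (s + s⁻¹) * powSubInvPow s (L + 1 - (i + 1)) := by
  obtain ⟨k, rfl⟩ : ∃ k, L = i + 1 + k := ⟨L - i - 1, by omega⟩
  rw [show i + 1 + k + 1 - i = k + 2 by omega, show i + 1 + k + 1 - (i + 2) = k by omega,
    show i + 1 + k + 1 - (i + 1) = k + 1 by omega, add_comm]
  exact powSubInvPow_add_two hs k

end PowSubInvPow

theorem isGreatest_treeMatrix_eigenvalues {p q r : ℕ} (hp : 0 < p) (hq : 0 < q) (hr : 0 < r)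
    {s : ℝ} (hs : 1 < s)
    (hcenter : powSubInvPow s p * powSubInvPow s (q + 1) * powSubInvPow s (r + 1) +
        powSubInvPow s (p + 1) * powSubInvPow s q * powSubInvPow s (r + 1) +
        powSubInvPow s (p + 1) * powSubInvPow s (q + 1) * powSubInvPow s r =
      (s + s⁻¹) * (powSubInvPow s (p + 1) * powSubInvPow s (q + 1) * powSubInvPow s (r + 1))) :
    IsGreatest {μ : ℝ | ∃ v : Fin (1 + p + q + r) → ℝ, v ≠ 0 ∧ treeMatrix p q r *ᵥ v = μ • v}
      (s + s⁻¹) := by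
  set w := powSubInvPow s
  have hs0 : s ≠ 0 := by positivity
  have hpos {i j k : ℕ} (hi : i ≠ 0) (hj : j ≠ 0) (hk : k ≠ 0) : 0 < w i * w j * w k :=
    mul_pos (mul_pos (powSubInvPow_pos hs hi) (powSubInvPow_pos hs hj)) (powSubInvPow_pos hs hk)
  have : Nonempty (Fin (1 + p + q + r)) := ⟨⟨0, by omega⟩⟩
  refine isGreatest_eigenvalues_of_pos_eigenvector treeMatrix_nonneg treeMatrix_isSymm
    (v := fun k => armVec p q (fun i => w (p + 1 - i) * w (q + 1) * w (r + 1))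
      (fun i => w (p + 1) * w (q + 1 - i) * w (r + 1))
      (fun i => w (p + 1) * w (q + 1) * w (r + 1 - i)) k)
    (fun k => armVec_pos (fun i _ => hpos (by omega) (by omega) (by omega))
      (fun i _ => hpos (by omega) (by omega) (by omega))
      (fun i _ => hpos (by omega) (by omega) (by omega)) k.isLt)
    (treeMatrix_mulVec_armVec hp hq hr (by simp) (by simp) (by simp [w]) (by simp [w])
      (by simp [w])
      (fun _ hi => by linear_combination w (q + 1) * w (r + 1) * powSubInvPow_sub_add_two hs0 hi)
      (fun _ hi => by linear_combination w (p + 1) * w (r + 1) * powSubInvPow_sub_add_two hs0 hi)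
      (fun _ hi => by linear_combination w (p + 1) * w (q + 1) * powSubInvPow_sub_add_two hs0 hi)
      (by simpa using hcenter))

def t24mPoly (m : ℕ) (x : ℝ) : ℝ := x ^ (m + 8) - x ^ (m + 7) - x ^ (m + 5) + x ^ 3 + x - 1

theorem powSubInvPow_center_of_t24mPoly {m : ℕ} {s : ℝ} (hs : s ≠ 0)
    (h : t24mPoly m (s ^ 2) = 0) :
    powSubInvPow s 1 * powSubInvPow s 4 * powSubInvPow s (3 + m + 1) +
        powSubInvPow s 2 * powSubInvPow s 3 * powSubInvPow s (3 + m + 1) +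
        powSubInvPow s 2 * powSubInvPow s 4 * powSubInvPow s (3 + m) =
      (s + s⁻¹) * (powSubInvPow s 2 * powSubInvPow s 4 * powSubInvPow s (3 + m + 1)) := by
  have hpow : ∀ k, (s ^ 2) ^ (m + k) = (s ^ m) ^ 2 * s ^ (2 * k) := fun k => by ring
  simp only [t24mPoly, hpow] at h
  have : s ^ m ≠ 0 := pow_ne_zero _ hs
  simp only [powSubInvPow, pow_add, inv_pow]
  field_simp
  linear_combination (-s ^ 6 + s ^ 4 + s ^ 2 - 1) * h

theorem exists_t24mPoly_eq_zero {m : ℕ} (hm : 1 ≤ m) : ∃ β : ℝ, 1 < β ∧ t24mPoly m β = 0 := by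
  -- `t24mPoly m 1 = 0`, so we look for a root of the quotient by `x - 1`.
  set Q : ℝ → ℝ := fun x => x ^ (m + 7) - x ^ 3 * ∑ i ∈ range (m + 2), x ^ i + 1
  have hQ : ∀ x, t24mPoly m x = (x - 1) * Q x := fun x => by
    have hg := geom_sum_mul x (m + 2)
    simp only [t24mPoly, Q]
    linear_combination x ^ 3 * hg
  have hQ1 : Q 1 < 0 := by
    have : (1 : ℝ) ≤ m := by exact_mod_cast hm
    simp [Q]; linarith
  have hQ2 : 0 < Q 2 := by
    have hg : ∑ i ∈ range (m + 2), (2 : ℝ) ^ i = 2 ^ (m + 2) - 1 := by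
      linear_combination geom_sum_mul (2 : ℝ) (m + 2)
    have : (2 : ℝ) ^ (m + 7) = 32 * 2 ^ (m + 2) := by ring
    simp only [Q, hg]; nlinarith [pow_pos (two_pos : (0 : ℝ) < 2) (m + 2)]
  have hQc : Continuous Q := by fun_prop
  obtain ⟨β, hβ, hQβ⟩ :=
    intermediate_value_Ioo (by norm_num : (1 : ℝ) ≤ 2) hQc.continuousOn ⟨hQ1, hQ2⟩
  exact ⟨β, hβ.1, by rw [hQ, hQβ, mul_zero]⟩

theorem injOn_add_inv : Set.InjOn (fun s : ℝ => s + s⁻¹) (Set.Ici 1) := by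
  intro s (hs : 1 ≤ s) t (ht : 1 ≤ t) (h : s + s⁻¹ = t + t⁻¹)
  have : (s - t) * (s * t - 1) = 0 := by
    field_simp at h
    linear_combination h
  rcases mul_eq_zero.mp this with h | h <;> nlinarith

/-- For every integer `m ≥ 1`, the polynomial
`x^{m+8} - x^{m+7} - x^{m+5} + x^3 + x - 1` has a unique real root `β_m > 1`,
and the largest eigenvalue of the adjacency matrix of the tree `T_{2,4,4+m}`
equals `β_m^{1/2} + β_m^{-1/2}`. -/
theorem T24m_largest_eigenvalue (m : ℕ) (hm : 1 ≤ m) :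
    (∃! β : ℝ, 1 < β ∧
        β^(m+8) - β^(m+7) - β^(m+5) + β^3 + β - 1 = 0) ∧
    ∀ β : ℝ, 1 < β → β^(m+8) - β^(m+7) - β^(m+5) + β^3 + β - 1 = 0 →
      IsGreatest {μ : ℝ | ∃ v : Fin (1 + 1 + 3 + (3 + m)) → ℝ, v ≠ 0 ∧
          (treeMatrix 1 3 (3 + m)).mulVec v = μ • v}
        (Real.sqrt β + (Real.sqrt β)⁻¹) := by
  have one_lt_sqrt {β : ℝ} (hβ : 1 < β) : 1 < √β := Real.lt_sqrt_of_sq_lt (by simpa using hβ)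
  have hgreatest : ∀ β : ℝ, 1 < β → t24mPoly m β = 0 →
      IsGreatest {μ : ℝ | ∃ v : Fin (1 + 1 + 3 + (3 + m)) → ℝ, v ≠ 0 ∧
        treeMatrix 1 3 (3 + m) *ᵥ v = μ • v} (√β + (√β)⁻¹) := fun β hβ hP =>
    isGreatest_treeMatrix_eigenvalues one_pos three_pos (by omega) (one_lt_sqrt hβ)
      (powSubInvPow_center_of_t24mPoly (by positivity) (by rwa [Real.sq_sqrt (by positivity)]))
  obtain ⟨c, hc, hPc⟩ := exists_t24mPoly_eq_zero hm
  refine ⟨⟨c, ⟨hc, hPc⟩, fun β ⟨hβ, hPβ⟩ => ?_⟩, hgreatest⟩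
  have hsqrt : √β = √c := injOn_add_inv (one_lt_sqrt hβ).le (one_lt_sqrt hc).le
    ((hgreatest β hβ hPβ).unique (hgreatest c hc hPc))
  exact (Real.sqrt_inj (by positivity) (by positivity)).mp hsqrt
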